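/- Let M₀ and N₀ be d×d complex matrices with 0 ≤ M₀ ≤ 1_d and 0 ≤ N₀ ≤ 1_d, and suppose M₀ − N₀ = c·1_d for some nonzero real scalar c. Then the measurement channels Φ_M, Φ_N of the two-outcome POVMs {M₀, 1_d − M₀} and {N₀, 1_d − N₀} form a Maximal Entanglement Best Case pair: ‖Φ_M − Φ_N‖_ME = ‖Φ_M − Φ_N‖_⋄. In particular this holds for the commuting POVM elements M₀ = diag(9/10, 3/5) and N₀ = diag(1/2, 1/5) on ℂ². -/

import Mathlib

open Matrix Kronecker ComplexOrder

noncomputable section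

/-- The matrix absolute value `|A| = √(AᴴA)`. -/
noncomputable def matAbs {n : Type*} [Fintype n] [DecidableEq n] (A : Matrix n n ℂ) :
    Matrix n n ℂ :=
  (Matrix.posSemidef_conjTranspose_mul_self A).1.cfc Real.sqrt

/-- The trace norm `‖A‖₁ = Tr √(AᴴA)`. -/
noncomputable def traceNorm {n : Type*} [Fintype n] [DecidableEq n] (A : Matrix n n ℂ) : ℝ :=
  ((matAbs A).trace).re

/-- The positive semidefinite square root of a PSD matrix (zero otherwise). -/
noncomputable def matSqrt {n : Type*} [Fintype n] [DecidableEq n] (σ : Matrix n n ℂ) :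
    Matrix n n ℂ :=
  open scoped Classical in
  if h : σ.PosSemidef then h.1.cfc Real.sqrt else 0

/-- A density matrix: positive semidefinite with unit trace. -/
def IsDensity {n : Type*} [Fintype n] [DecidableEq n] (σ : Matrix n n ℂ) : Prop :=
  σ.PosSemidef ∧ σ.trace = 1

/-- The Choi operator of a linear map between matrix algebras. -/
noncomputable def choi {d m : ℕ}
    (S : Matrix (Fin d) (Fin d) ℂ →ₗ[ℂ] Matrix (Fin m) (Fin m) ℂ) :
    Matrix (Fin m × Fin d) (Fin m × Fin d) ℂ :=
  ∑ i : Fin d, ∑ j : Fin d,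
    (S (Matrix.single i j 1)) ⊗ₖ (Matrix.single i j 1)

/-- The ME-norm `‖S‖_ME = ‖J(S)‖₁ / d`. -/
noncomputable def MENorm {d m : ℕ}
    (S : Matrix (Fin d) (Fin d) ℂ →ₗ[ℂ] Matrix (Fin m) (Fin m) ℂ) : ℝ :=
  traceNorm (choi S) / d

/-- The diamond norm: supremum over density matrices σ of
`‖(1 ⊗ √σ) J(S) (1 ⊗ √σ)‖₁`. -/
noncomputable def diamondNorm {d m : ℕ}
    (S : Matrix (Fin d) (Fin d) ℂ →ₗ[ℂ] Matrix (Fin m) (Fin m) ℂ) : ℝ :=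
  ⨆ σ : {σ : Matrix (Fin d) (Fin d) ℂ // IsDensity σ},
    traceNorm (((1 : Matrix (Fin m) (Fin m) ℂ) ⊗ₖ matSqrt σ.1) * choi S *
      ((1 : Matrix (Fin m) (Fin m) ℂ) ⊗ₖ matSqrt σ.1))

/-- The M-operator `M(S) = Tr_B |J(S)|`. -/
noncomputable def Mop {d m : ℕ}
    (S : Matrix (Fin d) (Fin d) ℂ →ₗ[ℂ] Matrix (Fin m) (Fin m) ℂ) :
    Matrix (Fin d) (Fin d) ℂ :=
  Matrix.of fun k l => ∑ b : Fin m, matAbs (choi S) (b, k) (b, l)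

/-- A quantum channel: completely positive (PSD Choi operator, by Choi's theorem)
and trace preserving. -/
def IsQChannel {d m : ℕ}
    (S : Matrix (Fin d) (Fin d) ℂ →ₗ[ℂ] Matrix (Fin m) (Fin m) ℂ) : Prop :=
  (choi S).PosSemidef ∧ ∀ ρ : Matrix (Fin d) (Fin d) ℂ, (S ρ).trace = ρ.trace

/-- A POVM with `n` outcomes on `ℂ^d`. -/
def IsPOVM {d n : ℕ} (M : Fin n → Matrix (Fin d) (Fin d) ℂ) : Prop :=
  (∀ i, (M i).PosSemidef) ∧ ∑ i, M i = 1

/-- The measurement channel of a family of POVM elements: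
`Φ_M(ρ) = ∑ i, Tr(ρ M_i) |i⟩⟨i|`. -/
noncomputable def measChannel {d n : ℕ} (M : Fin n → Matrix (Fin d) (Fin d) ℂ) :
    Matrix (Fin d) (Fin d) ℂ →ₗ[ℂ] Matrix (Fin n) (Fin n) ℂ where
  toFun ρ := ∑ i, (ρ * M i).trace • Matrix.single i i (1 : ℂ)
  map_add' ρ σ := by
    simp [add_mul, Matrix.trace_add, add_smul, Finset.sum_add_distrib]
  map_smul' c ρ := by
    simp [Matrix.smul_mul, Matrix.trace_smul, smul_smul, Finset.smul_sum]

/-- The symmetric Werner-Holevo channel `Φ₊(ρ) = (Tr(ρ)·1 + ρᵀ)/(d+1)`. -/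
noncomputable def whPlus (d : ℕ) :
    Matrix (Fin d) (Fin d) ℂ →ₗ[ℂ] Matrix (Fin d) (Fin d) ℂ where
  toFun ρ := ((d : ℂ) + 1)⁻¹ • (ρ.trace • (1 : Matrix (Fin d) (Fin d) ℂ) + ρ.transpose)
  map_add' ρ σ := by
    simp [Matrix.trace_add, Matrix.transpose_add, add_smul, smul_add]
    module
  map_smul' c ρ := by
    simp [Matrix.trace_smul, Matrix.transpose_smul, smul_smul, smul_add]
    module

/-- The antisymmetric Werner-Holevo channel `Φ₋(ρ) = (Tr(ρ)·1 − ρᵀ)/(d−1)`. -/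
noncomputable def whMinus (d : ℕ) :
    Matrix (Fin d) (Fin d) ℂ →ₗ[ℂ] Matrix (Fin d) (Fin d) ℂ where
  toFun ρ := ((d : ℂ) - 1)⁻¹ • (ρ.trace • (1 : Matrix (Fin d) (Fin d) ℂ) - ρ.transpose)
  map_add' ρ σ := by
    simp [Matrix.trace_add, Matrix.transpose_add, add_smul]
    module
  map_smul' c ρ := by
    simp [Matrix.trace_smul, Matrix.transpose_smul, smul_smul]
    module

/-- The unitary (conjugation) channel `Φ_U(ρ) = U ρ Uᴴ`. -/
noncomputable def conjChannel {d : ℕ} (U : Matrix (Fin d) (Fin d) ℂ) :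
    Matrix (Fin d) (Fin d) ℂ →ₗ[ℂ] Matrix (Fin d) (Fin d) ℂ where
  toFun ρ := U * ρ * Uᴴ
  map_add' ρ σ := by simp [Matrix.mul_add, Matrix.add_mul]
  map_smul' c ρ := by simp [Matrix.mul_smul, Matrix.smul_mul]


/-!
If `M i - N i = c i • 1` for every outcome, the difference `Δ` of the two measurement channels is
`ρ ↦ Tr ρ • X` with `X = diagonal c`. Its Choi operator is `X ⊗ 1`, and sandwiching it by
`1 ⊗ √σ` gives `X ⊗ σ`. For `σ ≥ 0` one has `|X ⊗ σ| = |X| ⊗ σ`, so `‖X ⊗ σ‖₁ = ‖X‖₁ Tr σ`: every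
density matrix realises the same value `‖X‖₁`, and the supremum defining the diamond norm equals
the value at the maximally mixed state, which is the ME-norm.
-/

open scoped MatrixOrder

section TraceNorm

variable {n m : Type*} [Fintype n] [DecidableEq n] [Fintype m] [DecidableEq m]

lemma matAbs_eq_cfcSqrt (A : Matrix n n ℂ) : matAbs A = CFC.sqrt (Aᴴ * A) := by
  rw [matAbs, ← IsHermitian.cfc_eq,
    CFC.sqrt_eq_real_sqrt _ (posSemidef_conjTranspose_mul_self A).nonneg, cfcₙ_eq_cfc]

lemma posSemidef_matAbs (A : Matrix n n ℂ) : (matAbs A).PosSemidef := by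
  rw [matAbs_eq_cfcSqrt]
  exact (CFC.sqrt_nonneg _).posSemidef

lemma matAbs_mul_self (A : Matrix n n ℂ) : matAbs A * matAbs A = Aᴴ * A := by
  rw [matAbs_eq_cfcSqrt]
  exact CFC.sqrt_mul_sqrt_self _ (posSemidef_conjTranspose_mul_self A).nonneg

lemma matAbs_eq_of_mul_self {A B : Matrix n n ℂ} (hB : B.PosSemidef) (h : B * B = Aᴴ * A) :
    matAbs A = B := by
  rw [matAbs_eq_cfcSqrt]
  exact CFC.sqrt_unique h hB.nonneg

lemma matAbs_kronecker (A : Matrix n n ℂ) {σ : Matrix m m ℂ} (hσ : σ.PosSemidef) :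
    matAbs (A ⊗ₖ σ) = matAbs A ⊗ₖ σ :=
  matAbs_eq_of_mul_self ((posSemidef_matAbs A).kronecker hσ) <| by
    rw [← mul_kronecker_mul, matAbs_mul_self, conjTranspose_kronecker, hσ.1.eq, mul_kronecker_mul]

lemma traceNorm_kronecker (A : Matrix n n ℂ) {σ : Matrix m m ℂ} (hσ : σ.PosSemidef) :
    traceNorm (A ⊗ₖ σ) = traceNorm A * σ.trace.re := by
  rw [traceNorm, traceNorm, matAbs_kronecker A hσ, trace_kronecker, Complex.mul_re,
    ← (Complex.nonneg_iff.1 hσ.trace_nonneg).2, mul_zero, sub_zero]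

lemma matSqrt_mul_self {σ : Matrix n n ℂ} (hσ : σ.PosSemidef) : matSqrt σ * matSqrt σ = σ := by
  rw [matSqrt, dif_pos hσ, ← hσ.1.cfc_eq, ← cfcₙ_eq_cfc, ← CFC.sqrt_eq_real_sqrt σ hσ.nonneg]
  exact CFC.sqrt_mul_sqrt_self σ hσ.nonneg

end TraceNorm

section TraceTimesConstant

variable {d m : ℕ} {S : Matrix (Fin d) (Fin d) ℂ →ₗ[ℂ] Matrix (Fin m) (Fin m) ℂ}
  {X : Matrix (Fin m) (Fin m) ℂ}

lemma choi_eq_kronecker_one (hS : ∀ ρ, S ρ = ρ.trace • X) : choi S = X ⊗ₖ 1 := by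
  ext ⟨a, k⟩ ⟨b, l⟩
  simp only [choi, hS, Matrix.sum_apply, kroneckerMap_apply, Matrix.smul_apply, smul_eq_mul,
    single_apply, ite_and, mul_ite, mul_one, mul_zero, Finset.sum_ite_irrel, Finset.sum_ite_eq',
    Finset.mem_univ, ↓reduceIte, Finset.sum_const_zero, Matrix.one_apply]
  split_ifs with hkl
  · simp [hkl]
  · simp [trace_single_eq_of_ne k l (1 : ℂ) hkl]

theorem MENorm_eq_traceNorm (hd : d ≠ 0) (hS : ∀ ρ, S ρ = ρ.trace • X) :
    MENorm S = traceNorm X := by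
  rw [MENorm, choi_eq_kronecker_one hS, traceNorm_kronecker X PosSemidef.one, trace_one]
  simp [hd]

theorem diamondNorm_eq_traceNorm (hd : d ≠ 0) (hS : ∀ ρ, S ρ = ρ.trace • X) :
    diamondNorm S = traceNorm X := by
  have : Nonempty {σ : Matrix (Fin d) (Fin d) ℂ // IsDensity σ} := by
    refine ⟨⟨(d : ℂ)⁻¹ • 1, PosSemidef.one.smul (by positivity), ?_⟩⟩
    simp [hd]
  have sandwich_eq : ∀ σ : {σ : Matrix (Fin d) (Fin d) ℂ // IsDensity σ},
      traceNorm (((1 : Matrix (Fin m) (Fin m) ℂ) ⊗ₖ matSqrt σ.1) * choi S *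
        ((1 : Matrix (Fin m) (Fin m) ℂ) ⊗ₖ matSqrt σ.1)) = traceNorm X := by
    rintro ⟨σ, hσ, htr⟩
    rw [choi_eq_kronecker_one hS, ← mul_kronecker_mul, ← mul_kronecker_mul, one_mul, mul_one,
      mul_one, matSqrt_mul_self hσ, traceNorm_kronecker X hσ, htr]
    simp
  rw [diamondNorm, iSup_congr sandwich_eq, ciSup_const]

end TraceTimesConstant

section MeasurementChannels

variable {d n : ℕ} {M N : Fin n → Matrix (Fin d) (Fin d) ℂ} {c : Fin n → ℂ}

lemma measChannel_sub_apply_of_sub_eq_smul_one (h : ∀ i, M i - N i = c i • 1)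
    (ρ : Matrix (Fin d) (Fin d) ℂ) :
    (measChannel M - measChannel N) ρ = ρ.trace • diagonal c := by
  simp only [LinearMap.sub_apply, measChannel, LinearMap.coe_mk, AddHom.coe_mk,
    ← Finset.sum_sub_distrib, ← sum_single_eq_diagonal, Finset.smul_sum]
  refine Finset.sum_congr rfl fun i _ => ?_
  rw [← sub_smul, ← trace_sub, ← mul_sub, h, Matrix.mul_smul, mul_one, trace_smul, smul_single,
    smul_single]
  simp only [smul_eq_mul, mul_one, mul_comm]

theorem MENorm_eq_diamondNorm_of_sub_eq_smul_one (hd : d ≠ 0) (h : ∀ i, M i - N i = c i • 1) :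
    MENorm (measChannel M - measChannel N) = diamondNorm (measChannel M - measChannel N) := by
  rw [MENorm_eq_traceNorm hd (measChannel_sub_apply_of_sub_eq_smul_one h),
    diamondNorm_eq_traceNorm hd (measChannel_sub_apply_of_sub_eq_smul_one h)]

end MeasurementChannels

theorem MENorm_eq_diamondNorm_of_twoOutcome {d : ℕ} {M₀ N₀ : Matrix (Fin d) (Fin d) ℂ} {c : ℂ}
    (hd : d ≠ 0) (h : M₀ - N₀ = c • 1) :
    MENorm (measChannel ![M₀, 1 - M₀] - measChannel ![N₀, 1 - N₀])
      = diamondNorm (measChannel ![M₀, 1 - M₀] - measChannel ![N₀, 1 - N₀]) := by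
  refine MENorm_eq_diamondNorm_of_sub_eq_smul_one hd (c := ![c, -c]) ?_
  rw [Fin.forall_fin_two]
  refine ⟨h, ?_⟩
  show 1 - M₀ - (1 - N₀) = (-c) • 1
  rw [sub_sub_sub_cancel_left, ← neg_sub, h, neg_smul]

theorem stmt13_general {d : ℕ} (hd : 1 ≤ d) (M₀ N₀ : Matrix (Fin d) (Fin d) ℂ)
    (c : ℝ) (hMN : M₀ - N₀ = (c : ℂ) • (1 : Matrix (Fin d) (Fin d) ℂ)) :
    MENorm (measChannel ![M₀, 1 - M₀] - measChannel ![N₀, 1 - N₀])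
      = diamondNorm (measChannel ![M₀, 1 - M₀] - measChannel ![N₀, 1 - N₀])
    ∧ MENorm (measChannel ![Matrix.diagonal ![(9 : ℂ)/10, 3/5],
            1 - Matrix.diagonal ![(9 : ℂ)/10, 3/5]]
          - measChannel ![Matrix.diagonal ![(1 : ℂ)/2, 1/5],
            1 - Matrix.diagonal ![(1 : ℂ)/2, 1/5]])
      = diamondNorm (measChannel ![Matrix.diagonal ![(9 : ℂ)/10, 3/5],
            1 - Matrix.diagonal ![(9 : ℂ)/10, 3/5]]
          - measChannel ![Matrix.diagonal ![(1 : ℂ)/2, 1/5],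
            1 - Matrix.diagonal ![(1 : ℂ)/2, 1/5]]) := by
  have example_sub : diagonal ![(9 : ℂ)/10, 3/5] - diagonal ![(1 : ℂ)/2, 1/5]
      = (2/5 : ℂ) • (1 : Matrix (Fin 2) (Fin 2) ℂ) := by
    ext i j
    fin_cases i <;> fin_cases j <;> norm_num [Matrix.one_apply]
  exact ⟨MENorm_eq_diamondNorm_of_twoOutcome (by omega) hMN,
    MENorm_eq_diamondNorm_of_twoOutcome two_ne_zero example_sub⟩

/-- if `M₀ − N₀ = c·1_d` with `c ≠ 0` real, the two-outcome
measurement channels form a MEBC pair: `‖Δ‖_ME = ‖Δ‖_⋄`. In particular this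
holds for `M₀ = diag(9/10, 3/5)`, `N₀ = diag(1/2, 1/5)` on `ℂ²`. -/
theorem stmt13 {d : ℕ} (hd : 1 ≤ d) (M₀ N₀ : Matrix (Fin d) (Fin d) ℂ)
    (hM₀ : M₀.PosSemidef) (hM₁ : (1 - M₀).PosSemidef)
    (hN₀ : N₀.PosSemidef) (hN₁ : (1 - N₀).PosSemidef)
    (c : ℝ) (hc : c ≠ 0) (hMN : M₀ - N₀ = (c : ℂ) • (1 : Matrix (Fin d) (Fin d) ℂ)) :
    MENorm (measChannel ![M₀, 1 - M₀] - measChannel ![N₀, 1 - N₀])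
      = diamondNorm (measChannel ![M₀, 1 - M₀] - measChannel ![N₀, 1 - N₀])
    ∧ MENorm (measChannel ![Matrix.diagonal ![(9 : ℂ)/10, 3/5],
            1 - Matrix.diagonal ![(9 : ℂ)/10, 3/5]]
          - measChannel ![Matrix.diagonal ![(1 : ℂ)/2, 1/5],
            1 - Matrix.diagonal ![(1 : ℂ)/2, 1/5]])
      = diamondNorm (measChannel ![Matrix.diagonal ![(9 : ℂ)/10, 3/5],
            1 - Matrix.diagonal ![(9 : ℂ)/10, 3/5]]
          - measChannel ![Matrix.diagonal ![(1 : ℂ)/2, 1/5],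
            1 - Matrix.diagonal ![(1 : ℂ)/2, 1/5]]) :=
  stmt13_general hd M₀ N₀ c hMN
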